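/- Let x be an infinite word that is not ultimately periodic and let n ≥ 1 satisfy p(n+1, x) = p(n, x) + 1. Then x has exactly one right-special factor of length n. Moreover, if the prefix x₁...x_n occurs more than once in x, then x has a unique left-special factor of length n and x is n-recurrent. -/
import Mathlib


open Filter

variable {A : Type*}

/-- The factor of the infinite word `x` of length `n` starting at position `j` (0-indexed). -/
def subwordAt (x : ℕ → A) (j n : ℕ) : List A := (List.range n).map fun i => x (j + i)

/-- `w` is a factor (subword) of the infinite word `x`. -/
def IsFactor (w : List A) (x : ℕ → A) : Prop := ∃ j, subwordAt x j w.length = w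

/-- The subword complexity `p(n, x)`: the number of distinct length-`n` factors of `x`. -/
noncomputable def complexity (x : ℕ → A) (n : ℕ) : ℕ :=
  Set.ncard {w : List A | w.length = n ∧ IsFactor w x}

/-- `x` is ultimately periodic. -/
def UltimatelyPeriodic (x : ℕ → A) : Prop := ∃ N T, 0 < T ∧ ∀ i ≥ N, x (i + T) = x i

/-- `w` is a left-special factor of `x`. -/
def LeftSpecial (w : List A) (x : ℕ → A) : Prop :=
  ∃ a b : A, a ≠ b ∧ IsFactor (a :: w) x ∧ IsFactor (b :: w) x

/-- `w` is a right-special factor of `x`. -/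
def RightSpecial (w : List A) (x : ℕ → A) : Prop :=
  ∃ a b : A, a ≠ b ∧ IsFactor (w ++ [a]) x ∧ IsFactor (w ++ [b]) x

/-- `w` occurs infinitely many times in `x`. -/
def OccursInfinitely (w : List A) (x : ℕ → A) : Prop :=
  {j : ℕ | subwordAt x j w.length = w}.Infinite

/-- `x` is `n`-recurrent: every length-`n` factor occurs infinitely often. -/
def NRecurrent (n : ℕ) (x : ℕ → A) : Prop :=
  ∀ j : ℕ, {i : ℕ | subwordAt x i n = subwordAt x j n}.Infinite

/-- The shift of `x` by `s` places. -/
def shiftWord (x : ℕ → A) (s : ℕ) : ℕ → A := fun i => x (s + i)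

/-- `s_m`: the length of the `m`-th non-recurrent prefix of `x`. -/
noncomputable def srec (x : ℕ → A) (m : ℕ) : ℕ := sInf {s : ℕ | NRecurrent m (shiftWord x s)}

/-- `z_m`: the maximal `m`-recurrent tail of `x`, so that `x = a_m z_m`. -/
noncomputable def ztail (x : ℕ → A) (m : ℕ) : ℕ → A := shiftWord x (srec x m)

/-- The repetition function `r(n, x)`: the least `m ≥ 1` such that
`x_{m+1} … x_{m+n} = x_{i+1} … x_{i+n}` for some `0 ≤ i < m`. -/
noncomputable def repFn (x : ℕ → A) (n : ℕ) : ℕ :=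
  sInf {m : ℕ | 0 < m ∧ ∃ i < m, subwordAt x m n = subwordAt x i n}

/-- A right-special factor `w` is essential if it is a suffix of right-special
factors of every length `m ≥ |w|`. -/
def EssentialRightSpecial (w : List A) (x : ℕ → A) : Prop :=
  RightSpecial w x ∧
    ∀ m, w.length ≤ m → ∃ W : List A, W.length = m ∧ RightSpecial W x ∧ W.drop (m - w.length) = w

/-- `C` is (the word read along) a cycle at `w` in the Rauzy graph `𝒢_n(y)`:
it has length `> n`, prefix `w`, suffix `w`, and is a factor of `y`. -/
def IsCycleAt (y : ℕ → A) (n : ℕ) (w C : List A) : Prop :=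
  n < C.length ∧ C.take n = w ∧ C.drop (C.length - n) = w ∧ IsFactor C y

/-- The Rauzy graph `𝒢_n(y)` is of `∞`-shape with bi-special vertex `w`
and the two (simple) cycles `U` and `V`. -/
def InftyShape (y : ℕ → A) (n : ℕ) (w U V : List A) : Prop :=
  w.length = n ∧ LeftSpecial w y ∧ RightSpecial w y ∧
  (∀ v : List A, v.length = n → IsFactor v y → (LeftSpecial v y ∨ RightSpecial v y) → v = w) ∧
  IsCycleAt y n w U ∧ IsCycleAt y n w V ∧ U ≠ V ∧
  (∀ j, 0 < j → j < U.length - n → (U.drop j).take n ≠ w) ∧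
  (∀ j, 0 < j → j < V.length - n → (V.drop j).take n ≠ w) ∧
  (∀ v : List A, v.length = n → IsFactor v y →
    (∃ j ≤ U.length - n, (U.drop j).take n = v) ∨ (∃ j ≤ V.length - n, (V.drop j).take n = v))

/-- The word read along the concatenated path `U V^b U`, where `U`, `V` are
cycles at a vertex of length `n` (gluing overlaps of length `n`). -/
def cyclePow (n : ℕ) (U V : List A) (b : ℕ) : List A :=
  U ++ (List.replicate b (V.drop n)).flatten ++ U.drop n

/-- The irrationality exponent of a real number, valued in `ℝ≥0∞`. -/
noncomputable def irrationalityExponent (ξ : ℝ) : ENNReal :=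
  ⨆ (μ : ℝ) (_ : {q : ℕ | 0 < q ∧ ∃ p : ℤ, |ξ - p / q| < 1 / (q : ℝ) ^ μ}.Infinite),
    ENNReal.ofReal μ
@[simp] lemma subwordAt_length (x : ℕ → A) (j n : ℕ) : (subwordAt x j n).length = n := by
  simp [subwordAt]

lemma subwordAt_succ_cons (x : ℕ → A) (j n : ℕ) :
    subwordAt x j (n+1) = x j :: subwordAt x (j+1) n := by
  simp only [subwordAt, List.range_succ_eq_map, List.map_cons, List.map_map]
  congr 1
  apply List.map_congr_left
  intro i _
  simp [Function.comp, Nat.add_assoc, Nat.add_comm 1 i]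

lemma subwordAt_succ_append (x : ℕ → A) (j n : ℕ) :
    subwordAt x j (n+1) = subwordAt x j n ++ [x (j+n)] := by
  simp [subwordAt, List.range_succ]

lemma isFactor_subwordAt (x : ℕ → A) (j n : ℕ) : IsFactor (subwordAt x j n) x :=
  ⟨j, by rw [subwordAt_length]⟩

lemma head_eq_of_subwordAt_eq (x : ℕ → A) {n : ℕ} (hn : 1 ≤ n) {j k : ℕ}
    (h : subwordAt x j n = subwordAt x k n) : x j = x k := by
  obtain ⟨m, rfl⟩ := Nat.exists_eq_add_of_le hn
  rw [Nat.add_comm, subwordAt_succ_cons, subwordAt_succ_cons] at h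
  exact (List.cons.injEq _ _ _ _ ▸ h).1

lemma step_eq (x : ℕ → A) (n : ℕ) {j k : ℕ}
    (h : subwordAt x j n = subwordAt x k n) (hx : x (j+n) = x (k+n)) :
    subwordAt x (j+1) n = subwordAt x (k+1) n := by
  have h1 : x j :: subwordAt x (j+1) n = x k :: subwordAt x (k+1) n := by
    rw [← subwordAt_succ_cons, ← subwordAt_succ_cons, subwordAt_succ_append,
      subwordAt_succ_append, h, hx]
  exact (List.cons.injEq _ _ _ _ ▸ h1).2

lemma rs_of_ne (x : ℕ → A) (n : ℕ) {j k : ℕ}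
    (h : subwordAt x j n = subwordAt x k n) (hne : x (j+n) ≠ x (k+n)) :
    RightSpecial (subwordAt x j n) x := by
  refine ⟨x (j+n), x (k+n), hne, ?_, ?_⟩
  · rw [← subwordAt_succ_append]; exact isFactor_subwordAt x j (n+1)
  · rw [h, ← subwordAt_succ_append]; exact isFactor_subwordAt x k (n+1)

lemma up_of_det [Finite A] (x : ℕ → A) {n : ℕ} (hn : 1 ≤ n) (N : ℕ)
    (hdet : ∀ j k, N ≤ j → N ≤ k → subwordAt x j n = subwordAt x k n → x (j+n) = x (k+n)) :
    UltimatelyPeriodic x := by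
  have : Finite {l : List A // l.length = n} := (List.finite_length_eq A n).to_subtype
  obtain ⟨i, i', hne, heq⟩ := Finite.exists_ne_map_eq_of_infinite
    (fun i : ℕ => (⟨subwordAt x (N+i) n, by simp⟩ : {l : List A // l.length = n}))
  have heq' : subwordAt x (N+i) n = subwordAt x (N+i') n := congrArg Subtype.val heq
  obtain ⟨j, k, hjk, hfjk⟩ : ∃ j k, j < k ∧ N ≤ j ∧ subwordAt x j n = subwordAt x k n := by
    rcases Nat.lt_or_ge i i' with hlt | hge
    · exact ⟨N+i, N+i', by omega, by omega, heq'⟩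
    · exact ⟨N+i', N+i, by omega, by omega, heq'.symm⟩
  obtain ⟨hNj, hfjk⟩ := hfjk
  have key : ∀ m, subwordAt x (j+m) n = subwordAt x (k+m) n := by
    intro m
    induction m with
    | zero => simpa using hfjk
    | succ m ih =>
      have hx := hdet (j+m) (k+m) (by omega) (by omega) ih
      have := step_eq x n ih hx
      simpa [Nat.add_assoc] using this
  refine ⟨j, k - j, by omega, fun i hi => ?_⟩
  have h2 := key (i - j)
  have e : j + (i - j) = i := by omega
  have e2 : k + (i - j) = i + (k - j) := by omega
  rw [e, e2] at h2
  exact (head_eq_of_subwordAt_eq x hn h2).symm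

lemma recurrent_aux [Finite A] (x : ℕ → A) (n : ℕ) (hn : 1 ≤ n)
    (hx : ¬ UltimatelyPeriodic x)
    (w : List A) (a b : A)
    (honly : ∀ c, IsFactor (w ++ [c]) x → c = a ∨ c = b)
    (huniq : ∀ v : List A, v.length = n → IsFactor v x → RightSpecial v x → v = w)
    (hpre : ∃ j, 0 < j ∧ subwordAt x j n = subwordAt x 0 n) :
    NRecurrent n x := by
  set f : ℕ → List A := fun j => subwordAt x j n with hf
  have hRSw : ∀ k, RightSpecial (f k) x → f k = w := fun k h =>
    huniq _ (by simp [hf]) (isFactor_subwordAt x k n) h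
  have hdetw : ∀ j k, f j = f k → x (j+n) ≠ x (k+n) → f j = w := by
    intro j k h hne
    exact hRSw j (rs_of_ne x n h hne)
  -- letters after an occurrence of w
  have hletter : ∀ i, f i = w → x (i+n) = a ∨ x (i+n) = b := by
    intro i hi
    apply honly
    rw [← hi, ← subwordAt_succ_append]
    exact isFactor_subwordAt x i (n+1)
  -- (1) w occurs infinitely often
  have hW : {k | f k = w}.Infinite := by
    by_contra hfin
    rw [Set.not_infinite] at hfin
    obtain ⟨N, hN⟩ := hfin.bddAbove
    apply hx
    apply up_of_det x hn (N+1)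
    intro j k hj hk hjk
    by_contra hne
    have := hdetw j k hjk hne
    exact absurd (hN this) (by omega)
  -- (2) step back
  have hback : ∀ j, {i | f i = f j}.Infinite → {i | f i = f (j+1)}.Infinite := by
    intro j hinf
    by_cases hw : f j = w
    · set Ja := {i | f i = f j ∧ x (i+n) = x (j+n)} with hJa
      by_cases hJ : Ja.Infinite
      · apply Set.Infinite.mono (s := (fun i => i + 1) '' Ja)
        · intro i hi
          obtain ⟨i', ⟨h1, h2⟩, rfl⟩ := hi
          exact step_eq x n h1 h2
        · exact hJ.image (Set.injOn_of_injective (fun p q => by omega))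
      · exfalso
        rw [Set.not_infinite] at hJ
        obtain ⟨N, hN⟩ := hJ.bddAbove
        -- the letter at j
        have hja : x (j+n) = a ∨ x (j+n) = b := hletter j hw
        apply hx
        apply up_of_det x hn (N+1)
        intro i k hi hk hik0
        have hik : f i = f k := hik0
        by_cases hiw : f i = w
        · have hkw : f k = w := by rw [← hik]; exact hiw
          have hia := hletter i hiw
          have hka := hletter k hkw
          have hinotJ : ¬ (f i = f j ∧ x (i+n) = x (j+n)) := fun h => by
            have := hN (show i ∈ Ja from h); omega
          have hknotJ : ¬ (f k = f j ∧ x (k+n) = x (j+n)) := fun h => by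
            have := hN (show k ∈ Ja from h); omega
          have hfij : f i = f j := by rw [hiw, hw]
          have hfkj : f k = f j := by rw [hkw, hw]
          have h1 : x (i+n) ≠ x (j+n) := fun h => hinotJ ⟨hfij, h⟩
          have h2 : x (k+n) ≠ x (j+n) := fun h => hknotJ ⟨hfkj, h⟩
          rcases hja with hja | hja <;> rcases hia with hia | hia <;>
            rcases hka with hka | hka <;> simp_all
        · by_contra hne
          exact hiw (hdetw i k hik hne)
    · apply Set.Infinite.mono (s := (fun i => i + 1) '' {i | f i = f j})
      · intro i hi
        obtain ⟨i', h1, rfl⟩ := hi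
        have hxx : x (i'+n) = x (j+n) := by
          by_contra hne
          exact hw (by rw [← h1]; exact hdetw i' j h1 hne)
        exact step_eq x n h1 hxx
      · exact hinf.image (Set.injOn_of_injective (fun p q => by omega))
  -- (3) main
  intro j
  by_contra hfin
  -- P m: f m occurs finitely often
  have hPstep : ∀ m, ¬ {i | f i = f (m+1)}.Infinite → True := fun _ _ => trivial
  have hP : ∀ m k, ¬ {i | f i = f (k+m)}.Infinite → ¬ {i | f i = f k}.Infinite := by
    intro m
    induction m with
    | zero => intro k h; simpa using h
    | succ m ih =>
      intro k h
      have : ¬ {i | f i = f ((k+1)+m)}.Infinite := by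
        have e : (k+1)+m = k+(m+1) := by omega
        rwa [e]
      intro hc
      exact (ih (k+1) this) (hback k hc)
  have hP0 : ¬ {i | f i = f 0}.Infinite := hP j 0 (by simpa using hfin)
  obtain ⟨j0, hj0, hj0eq⟩ := hpre
  have hPm : ∀ m, m ≤ j0 → ¬ {i | f i = f m}.Infinite := by
    intro m hm
    apply hP (j0 - m)
    have e : m + (j0 - m) = j0 := by omega
    rw [e]
    have : {i | f i = f j0} = {i | f i = f 0} := by
      ext i; simp only [Set.mem_setOf_eq, hf]; rw [hj0eq]
    rw [this]
    exact hP0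
  have hnw : ∀ m, m ≤ j0 → f m ≠ w := by
    intro m hm hmw
    apply hPm m hm
    apply hW.mono
    intro i hi
    simp only [Set.mem_setOf_eq] at hi ⊢
    rw [hi, hmw]
  -- periodicity
  have key : ∀ k, f (k + j0) = f k ∧ ∃ i, i < j0 ∧ f k = f i := by
    intro k
    induction k with
    | zero => exact ⟨by simpa using hj0eq, 0, hj0, rfl⟩
    | succ k ih =>
      obtain ⟨h1, i, hi, h2⟩ := ih
      have hknotw : f k ≠ w := by
        rw [h2]; exact hnw i (by omega)
      have hd1 : x (k + j0 + n) = x (k + n) := by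
        by_contra hne
        exact hknotw (by rw [← h1]; exact hdetw _ _ h1 hne)
      have hd2 : x (k + n) = x (i + n) := by
        by_contra hne
        exact hknotw (hdetw _ _ h2 hne)
      have hs1 : f (k + j0 + 1) = f (k + 1) := step_eq x n h1 hd1
      have hs2 : f (k + 1) = f (i + 1) := step_eq x n h2 hd2
      refine ⟨by rw [show k + 1 + j0 = k + j0 + 1 by omega]; exact hs1, ?_⟩
      by_cases hij : i + 1 < j0
      · exact ⟨i + 1, hij, hs2⟩
      · have : i + 1 = j0 := by omega
        exact ⟨0, hj0, by rw [hs2, this]; simpa using hj0eq⟩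
  apply hx
  refine ⟨0, j0, hj0, fun i _ => ?_⟩
  exact head_eq_of_subwordAt_eq x hn (key i).1

lemma subwordAt_take (x : ℕ → A) (j n : ℕ) :
    (subwordAt x j (n+1)).take n = subwordAt x j n := by
  rw [subwordAt_succ_append]; exact List.take_left' (by simp)

lemma subwordAt_drop_one (x : ℕ → A) (j n : ℕ) :
    (subwordAt x j (n+1)).drop 1 = subwordAt x (j+1) n := by
  rw [subwordAt_succ_cons]; rfl

lemma factor_iff (x : ℕ → A) (n : ℕ) (w : List A) :
    (w.length = n ∧ IsFactor w x) ↔ ∃ j, subwordAt x j n = w := by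
  constructor
  · rintro ⟨hlen, j, hj⟩
    exact ⟨j, by rw [← hlen]; exact hj⟩
  · rintro ⟨j, rfl⟩
    exact ⟨by simp, isFactor_subwordAt x j n⟩

lemma count_lemma {β : Type*} [DecidableEq β] (s t : Finset β) (π : β → β)
    (hmap : ∀ w ∈ t, π w ∈ s) (hsurj : ∀ w ∈ s, ∃ w' ∈ t, π w' = w)
    (hcard : t.card = s.card + 1) :
    ∃ w0 ∈ s, (t.filter (fun w' => π w' = w0)).card = 2 ∧
      ∀ v ∈ s, v ≠ w0 → (t.filter (fun w' => π w' = v)).card = 1 := by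
  classical
  set c : β → ℕ := fun w => (t.filter (fun w' => π w' = w)).card with hc
  have hsum : ∑ w ∈ s, c w = s.card + 1 := by
    rw [← hcard]; exact (Finset.card_eq_sum_card_fiberwise hmap).symm
  have hone : ∀ w ∈ s, 1 ≤ c w := by
    intro w hw
    obtain ⟨w', hw', hπ⟩ := hsurj w hw
    exact Finset.card_pos.mpr ⟨w', Finset.mem_filter.mpr ⟨hw', hπ⟩⟩
  obtain ⟨w0, hw0, hw02⟩ : ∃ w0 ∈ s, 2 ≤ c w0 := by
    by_contra h
    push_neg at h
    have : ∑ w ∈ s, c w = ∑ w ∈ s, 1 := by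
      apply Finset.sum_congr rfl
      intro w hw
      have := hone w hw; have := h w hw; omega
    simp only [Finset.sum_const, smul_eq_mul, mul_one] at this
    omega
  have herase : ∑ w ∈ s.erase w0, c w + c w0 = s.card + 1 := by
    rw [Finset.sum_erase_add s c hw0]; exact hsum
  have hcard_erase : (s.erase w0).card = s.card - 1 := Finset.card_erase_of_mem hw0
  have hle : (s.erase w0).card ≤ ∑ w ∈ s.erase w0, c w := by
    calc (s.erase w0).card = ∑ w ∈ s.erase w0, 1 := by simp
    _ ≤ ∑ w ∈ s.erase w0, c w :=
      Finset.sum_le_sum fun w hw => hone w (Finset.mem_of_mem_erase hw)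
  have hscard : 1 ≤ s.card := Finset.card_pos.mpr ⟨w0, hw0⟩
  have hcw0 : c w0 = 2 := by omega
  refine ⟨w0, hw0, hcw0, fun v hv hvne => ?_⟩
  by_contra hne1
  have h2 : 1 < c v := (hone v hv).lt_of_ne fun h => hne1 h.symm
  have hvmem : v ∈ s.erase w0 := Finset.mem_erase.mpr ⟨hvne, hv⟩
  have : ∑ w ∈ s.erase w0, 1 < ∑ w ∈ s.erase w0, c w := by
    apply Finset.sum_lt_sum (fun w hw => hone w (Finset.mem_of_mem_erase hw)) ⟨v, hvmem, h2⟩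
  simp only [Finset.sum_const, smul_eq_mul, mul_one] at this
  omega

lemma rs_structure [Finite A] (x : ℕ → A) (n : ℕ)
    (hp : complexity x (n+1) = complexity x n + 1) :
    ∃ (w : List A) (a b : A), w.length = n ∧ IsFactor w x ∧ a ≠ b ∧
      IsFactor (w ++ [a]) x ∧ IsFactor (w ++ [b]) x ∧
      (∀ c, IsFactor (w ++ [c]) x → c = a ∨ c = b) ∧
      (∀ v : List A, v.length = n → IsFactor v x → RightSpecial v x → v = w) := by
  classical
  have hFn : {w : List A | w.length = n ∧ IsFactor w x}.Finite :=
    (List.finite_length_eq A n).subset fun w hw => hw.1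
  have hFn1 : {w : List A | w.length = n+1 ∧ IsFactor w x}.Finite :=
    (List.finite_length_eq A (n+1)).subset fun w hw => hw.1
  set s := hFn.toFinset with hs
  set t := hFn1.toFinset with ht
  have hmem_s : ∀ w, w ∈ s ↔ ∃ j, subwordAt x j n = w := by
    intro w; rw [hs, Set.Finite.mem_toFinset, Set.mem_setOf_eq, factor_iff]
  have hmem_t : ∀ w, w ∈ t ↔ ∃ j, subwordAt x j (n+1) = w := by
    intro w; rw [ht, Set.Finite.mem_toFinset, Set.mem_setOf_eq, factor_iff]
  have hcards : complexity x n = s.card := Set.ncard_eq_toFinset_card _ hFn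
  have hcardt : complexity x (n+1) = t.card := Set.ncard_eq_toFinset_card _ hFn1
  have hmap : ∀ w ∈ t, w.take n ∈ s := by
    intro w hw
    obtain ⟨j, rfl⟩ := (hmem_t w).mp hw
    exact (hmem_s _).mpr ⟨j, (subwordAt_take x j n).symm⟩
  have hsurj : ∀ w ∈ s, ∃ w' ∈ t, w'.take n = w := by
    intro w hw
    obtain ⟨j, rfl⟩ := (hmem_s w).mp hw
    exact ⟨subwordAt x j (n+1), (hmem_t _).mpr ⟨j, rfl⟩, subwordAt_take x j n⟩
  obtain ⟨w0, hw0, hfib2, hfib1⟩ := count_lemma s t (fun w => w.take n) hmap hsurj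
    (by omega)
  -- fiber description
  have hfibdesc : ∀ v, v ∈ s → ∀ w' ∈ t.filter (fun w' => w'.take n = v),
      ∃ c, w' = v ++ [c] := by
    intro v hv w' hw'
    rw [Finset.mem_filter] at hw'
    obtain ⟨hw't, htake⟩ := hw'
    have hlen : w'.length = n + 1 := by
      obtain ⟨j, rfl⟩ := (hmem_t w').mp hw't; simp
    have hdroplen : (w'.drop n).length = 1 := by simp [hlen]
    obtain ⟨c, hc⟩ := List.length_eq_one_iff.mp hdroplen
    exact ⟨c, by rw [← List.take_append_drop n w', htake, hc]⟩
  have hmemfib : ∀ v, v ∈ s → ∀ c, IsFactor (v ++ [c]) x →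
      v ++ [c] ∈ t.filter (fun w' => w'.take n = v) := by
    intro v hv c hfac
    have hvlen : v.length = n := by
      obtain ⟨j, rfl⟩ := (hmem_s v).mp hv; simp
    rw [Finset.mem_filter]
    constructor
    · rw [ht, Set.Finite.mem_toFinset, Set.mem_setOf_eq]
      exact ⟨by simp [hvlen], hfac⟩
    · exact List.take_left' hvlen
  -- two elements of the w0-fiber
  obtain ⟨w1, hw1, w2, hw2, hne12⟩ := Finset.one_lt_card.mp (by omega :
    1 < (t.filter (fun w' => w'.take n = w0)).card)
  obtain ⟨a, ha⟩ := hfibdesc w0 hw0 w1 hw1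
  obtain ⟨b, hb⟩ := hfibdesc w0 hw0 w2 hw2
  have hab : a ≠ b := by
    intro h; apply hne12; rw [ha, hb, h]
  have hw0len : w0.length = n := by
    obtain ⟨j, rfl⟩ := (hmem_s w0).mp hw0; simp
  have hw0fac : IsFactor w0 x := by
    obtain ⟨j, rfl⟩ := (hmem_s w0).mp hw0; exact isFactor_subwordAt x j n
  have hfaca : IsFactor (w0 ++ [a]) x := by
    rw [← ha]
    obtain ⟨j, rfl⟩ := (hmem_t w1).mp (Finset.mem_filter.mp hw1).1
    exact isFactor_subwordAt x j (n+1)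
  have hfacb : IsFactor (w0 ++ [b]) x := by
    rw [← hb]
    obtain ⟨j, rfl⟩ := (hmem_t w2).mp (Finset.mem_filter.mp hw2).1
    exact isFactor_subwordAt x j (n+1)
  -- fiber is exactly the pair
  have hpair : t.filter (fun w' => w'.take n = w0) = {w1, w2} := by
    apply (Finset.eq_of_subset_of_card_le ?_ ?_).symm
    · intro y hy
      rcases Finset.mem_insert.mp hy with h | h
      · rwa [h]
      · rw [Finset.mem_singleton] at h; rwa [h]
    · rw [Finset.card_pair hne12, hfib2]
  have honly : ∀ c, IsFactor (w0 ++ [c]) x → c = a ∨ c = b := by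
    intro c hc
    have := hmemfib w0 hw0 c hc
    rw [hpair] at this
    rcases Finset.mem_insert.mp this with h | h
    · left; rw [ha] at h; exact List.singleton_injective (List.append_cancel_left h)
    · rw [Finset.mem_singleton] at h
      right; rw [hb] at h; exact List.singleton_injective (List.append_cancel_left h)
  refine ⟨w0, a, b, hw0len, hw0fac, hab, hfaca, hfacb, honly, ?_⟩
  intro v hvlen hvfac hvrs
  by_contra hvne
  have hvs : v ∈ s := by rw [hs, Set.Finite.mem_toFinset]; exact ⟨hvlen, hvfac⟩
  have h1 := hfib1 v hvs hvne
  obtain ⟨a', b', hab', hfa', hfb'⟩ := hvrs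
  have hm1 := hmemfib v hvs a' hfa'
  have hm2 := hmemfib v hvs b' hfb'
  have : (1 : ℕ) < (t.filter (fun w' => w'.take n = v)).card := by
    apply Finset.one_lt_card.mpr
    exact ⟨_, hm1, _, hm2, fun h => hab' (List.singleton_injective (List.append_cancel_left h))⟩
  omega

lemma ls_structure [Finite A] (x : ℕ → A) (n : ℕ)
    (hp : complexity x (n+1) = complexity x n + 1)
    (hpos : ∀ w : List A, (∃ j, subwordAt x j n = w) → ∃ j, 0 < j ∧ subwordAt x j n = w) :
    ∃ w : List A, (w.length = n ∧ IsFactor w x ∧ LeftSpecial w x) ∧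
      (∀ v : List A, v.length = n → IsFactor v x → LeftSpecial v x → v = w) := by
  classical
  have hFn : {w : List A | w.length = n ∧ IsFactor w x}.Finite :=
    (List.finite_length_eq A n).subset fun w hw => hw.1
  have hFn1 : {w : List A | w.length = n+1 ∧ IsFactor w x}.Finite :=
    (List.finite_length_eq A (n+1)).subset fun w hw => hw.1
  set s := hFn.toFinset with hs
  set t := hFn1.toFinset with ht
  have hmem_s : ∀ w, w ∈ s ↔ ∃ j, subwordAt x j n = w := by
    intro w; rw [hs, Set.Finite.mem_toFinset, Set.mem_setOf_eq, factor_iff]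
  have hmem_t : ∀ w, w ∈ t ↔ ∃ j, subwordAt x j (n+1) = w := by
    intro w; rw [ht, Set.Finite.mem_toFinset, Set.mem_setOf_eq, factor_iff]
  have hcards : complexity x n = s.card := Set.ncard_eq_toFinset_card _ hFn
  have hcardt : complexity x (n+1) = t.card := Set.ncard_eq_toFinset_card _ hFn1
  have hmap : ∀ w ∈ t, w.drop 1 ∈ s := by
    intro w hw
    obtain ⟨j, rfl⟩ := (hmem_t w).mp hw
    exact (hmem_s _).mpr ⟨j+1, (subwordAt_drop_one x j n).symm⟩
  have hsurj : ∀ w ∈ s, ∃ w' ∈ t, w'.drop 1 = w := by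
    intro w hw
    obtain ⟨j, hj0, hj⟩ := hpos w ((hmem_s w).mp hw)
    refine ⟨subwordAt x (j-1) (n+1), (hmem_t _).mpr ⟨j-1, rfl⟩, ?_⟩
    rw [subwordAt_drop_one]
    rw [Nat.sub_add_cancel hj0]
    exact hj
  obtain ⟨w0, hw0, hfib2, hfib1⟩ := count_lemma s t (fun w => w.drop 1) hmap hsurj
    (by omega)
  have hfibdesc : ∀ v, ∀ w' ∈ t.filter (fun w' => w'.drop 1 = v),
      ∃ c, w' = c :: v := by
    intro v w' hw'
    rw [Finset.mem_filter] at hw'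
    obtain ⟨hw't, hdrop⟩ := hw'
    have hlen : w'.length = n + 1 := by
      obtain ⟨j, rfl⟩ := (hmem_t w').mp hw't; simp
    obtain ⟨c, l, rfl⟩ := List.exists_cons_of_ne_nil
      (show w' ≠ [] by intro h; rw [h] at hlen; simp at hlen)
    exact ⟨c, by simp_all⟩
  have hmemfib : ∀ v, v ∈ s → ∀ c, IsFactor (c :: v) x →
      c :: v ∈ t.filter (fun w' => w'.drop 1 = v) := by
    intro v hv c hfac
    have hvlen : v.length = n := by
      obtain ⟨j, rfl⟩ := (hmem_s v).mp hv; simp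
    rw [Finset.mem_filter]
    exact ⟨by rw [ht, Set.Finite.mem_toFinset, Set.mem_setOf_eq]; exact ⟨by simp [hvlen], hfac⟩,
      by simp⟩
  obtain ⟨w1, hw1, w2, hw2, hne12⟩ := Finset.one_lt_card.mp (by omega :
    1 < (t.filter (fun w' => w'.drop 1 = w0)).card)
  obtain ⟨a, ha⟩ := hfibdesc w0 w1 hw1
  obtain ⟨b, hb⟩ := hfibdesc w0 w2 hw2
  have hab : a ≠ b := by
    intro h; apply hne12; rw [ha, hb, h]
  have hw0len : w0.length = n := by
    obtain ⟨j, rfl⟩ := (hmem_s w0).mp hw0; simp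
  have hw0fac : IsFactor w0 x := by
    obtain ⟨j, rfl⟩ := (hmem_s w0).mp hw0; exact isFactor_subwordAt x j n
  have hfaca : IsFactor (a :: w0) x := by
    rw [← ha]
    obtain ⟨j, rfl⟩ := (hmem_t w1).mp (Finset.mem_filter.mp hw1).1
    exact isFactor_subwordAt x j (n+1)
  have hfacb : IsFactor (b :: w0) x := by
    rw [← hb]
    obtain ⟨j, rfl⟩ := (hmem_t w2).mp (Finset.mem_filter.mp hw2).1
    exact isFactor_subwordAt x j (n+1)
  refine ⟨w0, ⟨hw0len, hw0fac, a, b, hab, hfaca, hfacb⟩, ?_⟩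
  intro v hvlen hvfac hvls
  by_contra hvne
  have hvs : v ∈ s := by rw [hs, Set.Finite.mem_toFinset]; exact ⟨hvlen, hvfac⟩
  have h1 := hfib1 v hvs hvne
  obtain ⟨a', b', hab', hfa', hfb'⟩ := hvls
  have hm1 := hmemfib v hvs a' hfa'
  have hm2 := hmemfib v hvs b' hfb'
  have : (1 : ℕ) < (t.filter (fun w' => w'.drop 1 = v)).card := by
    apply Finset.one_lt_card.mpr
    refine ⟨_, hm1, _, hm2, fun h => hab' ?_⟩
    exact (List.cons.injEq _ _ _ _ ▸ h).1
  omega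

theorem unique_special_of_complexity_step {A : Type*} [Fintype A] (x : ℕ → A) (n : ℕ)
    (hn : 1 ≤ n) (hx : ¬ UltimatelyPeriodic x)
    (hp : complexity x (n + 1) = complexity x n + 1) :
    (∃! w : List A, w.length = n ∧ IsFactor w x ∧ RightSpecial w x) ∧
      ((∃ j : ℕ, 0 < j ∧ subwordAt x j n = subwordAt x 0 n) →
        (∃! w : List A, w.length = n ∧ IsFactor w x ∧ LeftSpecial w x) ∧ NRecurrent n x) := by
  classical
  obtain ⟨w, a, b, hwlen, hwfac, hab, hfaca, hfacb, honly, huniq⟩ := rs_structure x n hp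
  constructor
  · exact ⟨w, ⟨hwlen, hwfac, a, b, hab, hfaca, hfacb⟩,
      fun v hv => huniq v hv.1 hv.2.1 hv.2.2⟩
  · intro hpre
    obtain ⟨j0, hj0, hj0eq⟩ := hpre
    have hpos : ∀ v : List A, (∃ j, subwordAt x j n = v) → ∃ j, 0 < j ∧ subwordAt x j n = v := by
      rintro v ⟨j, hj⟩
      match j, hj with
      | 0, hj => exact ⟨j0, hj0, hj0eq.trans hj⟩
      | (k+1), hj => exact ⟨k+1, Nat.succ_pos k, hj⟩
    constructor
    · obtain ⟨w', hw', huniq'⟩ := ls_structure x n hp hpos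
      exact ⟨w', hw', fun v hv => huniq' v hv.1 hv.2.1 hv.2.2⟩
    · exact recurrent_aux x n hn hx w a b honly huniq ⟨j0, hj0, hj0eq⟩
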